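/- (Zeon quadratic formula) Let φ(u) = αu² + βu + γ with α, β, γ ∈ CZ_n and ⟨α⟩_0 ≠ 0, and let Δ = β² − 4αγ. Then the zero set of φ is exactly { (α^{-1}/2)(w − β) : w ∈ CZ_n, w² = Δ }. In particular: (i) if Δ = 0, then the zeros are exactly −α^{-1}β/2 + η for η ∈ CZ_n with η² = 0; (ii) if ⟨Δ⟩_0 ≠ 0, then φ has exactly two distinct zeros. -/

import Mathlib

noncomputable section

/-- The ideal of squares of generators defining the zeon algebra. -/
def zeonIdeal (n : ℕ) : Ideal (MvPolynomial (Fin n) ℂ) :=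
  Ideal.span (Set.range fun i : Fin n => (MvPolynomial.X i : MvPolynomial (Fin n) ℂ) ^ 2)

/-- The `n`-particle complex zeon algebra `CZ_n`. -/
abbrev Zeon (n : ℕ) := MvPolynomial (Fin n) ℂ ⧸ zeonIdeal n

/-- The scalar part `⟨u⟩₀` of a zeon, as a `ℂ`-algebra homomorphism. -/
def scalarPart (n : ℕ) : Zeon n →ₐ[ℂ] ℂ :=
  Ideal.Quotient.liftₐ (zeonIdeal n) (MvPolynomial.aeval fun _ => (0 : ℂ)) (by
    intro a ha
    have h : zeonIdeal n ≤ RingHom.ker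
        (MvPolynomial.aeval (R := ℂ) fun _ : Fin n => (0 : ℂ)).toRingHom := by
      rw [zeonIdeal, Ideal.span_le]
      rintro _ ⟨i, rfl⟩
      simp [RingHom.mem_ker]
    exact h ha)

/-- The dual (nilpotent) part `Du = u - ⟨u⟩₀`. -/
def dualPart (n : ℕ) (u : Zeon n) : Zeon n := u - algebraMap ℂ (Zeon n) (scalarPart n u)

/-- The generator `ζ_i`. -/
def zeta (n : ℕ) (i : Fin n) : Zeon n := Ideal.Quotient.mk _ (MvPolynomial.X i)

/-- The basis blade `ζ_I`. -/
def blade (n : ℕ) (I : Finset (Fin n)) : Zeon n :=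
  Ideal.Quotient.mk _ (∏ i ∈ I, MvPolynomial.X i)

/-!
Completing the square gives `4α(αu² + βu + γ) = (2αu + β)² - Δ` with `4α` a unit, so the zeros
are the images of the square roots of `Δ` under the bijection `w ↦ (2α)⁻¹(w - β)`.
The kernel of the scalar part consists of nilpotents, so a zeon with nonzero scalar part is a
unit. Newton's method lifts a complex square root of `⟨Δ⟩₀` to a square root `w₀` of `Δ`, and if
`w² = w₀²` then one of `w ± w₀` has nonzero scalar part, hence is a unit, which forces `w = ±w₀`.
-/

section Quadratic

variable {R : Type*} [CommRing R] {a b c t x : R}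

theorem quadratic_eq_zero_iff_exists_sq_eq_discrim (ht : t * (2 * a) = 1) :
    a * x ^ 2 + b * x + c = 0 ↔ ∃ w, w ^ 2 = discrim a b c ∧ x = t * (w - b) := by
  constructor
  · intro hx
    refine ⟨2 * a * x + b, ?_, by linear_combination -x * ht⟩
    exact (discrim_eq_sq_of_quadratic_eq_zero (by rwa [← sq])).symm
  · rintro ⟨w, hw, rfl⟩
    have hcompleted : 4 * a * (a * (t * (w - b)) ^ 2 + b * (t * (w - b)) + c) = 0 := by
      rw [discrim] at hw
      linear_combination (w - b) * (2 * a * (t * (w - b)) + b + w) * ht + hw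
    linear_combination (t * t * a) * hcompleted
      - (t * (2 * a) + 1) * (a * (t * (w - b)) ^ 2 + b * (t * (w - b)) + c) * ht

theorem setOf_quadratic_eq_zero_eq_image (ht : t * (2 * a) = 1) :
    {x | a * x ^ 2 + b * x + c = 0} = (fun w => t * (w - b)) '' {w | w ^ 2 = discrim a b c} := by
  ext x
  simp only [Set.mem_ofPred_eq, Set.mem_image, quadratic_eq_zero_iff_exists_sq_eq_discrim ht,
    eq_comm (a := x)]

theorem ncard_setOf_quadratic_eq_zero (ht : t * (2 * a) = 1) :
    {x | a * x ^ 2 + b * x + c = 0}.ncard = {w | w ^ 2 = discrim a b c}.ncard := by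
  rw [setOf_quadratic_eq_zero_eq_image ht]
  refine Set.ncard_image_of_injective _ fun w z hwz => ?_
  linear_combination (2 * a) * hwz - (w - z) * ht

theorem quadratic_eq_zero_iff_exists_sq_eq_zero (ht : t * (2 * a) = 1)
    (hΔ : discrim a b c = 0) :
    a * x ^ 2 + b * x + c = 0 ↔ ∃ η, η ^ 2 = 0 ∧ x = -(t * b) + η := by
  rw [quadratic_eq_zero_iff_exists_sq_eq_discrim ht, hΔ]
  constructor
  · rintro ⟨w, hw, rfl⟩
    exact ⟨t * w, by rw [mul_pow, hw, mul_zero], by ring⟩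
  · rintro ⟨η, hη, rfl⟩
    exact ⟨2 * a * η, by rw [mul_pow, hη, mul_zero], by linear_combination -η * ht⟩

end Quadratic

section NilKernel

variable {K A : Type*} [Field K] [CommRing A] [Algebra K A] {φ : A →ₐ[K] K}

theorem isUnit_of_ker_le_nilradical (hφ : RingHom.ker φ ≤ nilradical A) {u : A} (hu : φ u ≠ 0) :
    IsUnit u := by
  have hnil : IsNilpotent (u - algebraMap K A (φ u)) :=
    mem_nilradical.1 (hφ (by simp [RingHom.mem_ker]))
  simpa using hnil.isUnit_add_right_of_commute ((isUnit_iff_ne_zero.2 hu).map (algebraMap K A))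
    (.all _ _)

open Polynomial in
theorem exists_sq_eq_of_ker_le_nilradical [NeZero (2 : K)] (hφ : RingHom.ker φ ≤ nilradical A)
    {Δ : A} {d : K} (hd : d ^ 2 = φ Δ) (hd0 : d ≠ 0) : ∃ w : A, w ^ 2 = Δ ∧ φ w = d := by
  have hΔ : IsNilpotent (aeval (algebraMap K A d) (X ^ 2 - C Δ)) :=
    mem_nilradical.1 (hφ (by simp [RingHom.mem_ker, ← map_pow, hd]))
  have hP' : IsUnit (aeval (algebraMap K A d) (derivative (X ^ 2 - C Δ))) :=
    isUnit_of_ker_le_nilradical hφ (by simp [hd0]; exact one_add_one_eq_two.trans_ne two_ne_zero)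
  obtain ⟨w, ⟨hdw, hw⟩, -⟩ := existsUnique_nilpotent_sub_and_aeval_eq_zero hΔ hP'
  refine ⟨w, by simpa [sub_eq_zero] using hw, ?_⟩
  have := (hdw.map φ).eq_zero
  simp only [map_sub, AlgHom.commutes, Algebra.algebraMap_self, RingHom.id_apply] at this
  linear_combination -this

theorem sq_eq_sq_iff_of_ker_le_nilradical [NeZero (2 : K)] (hφ : RingHom.ker φ ≤ nilradical A)
    {v w : A} (hv : φ v ≠ 0) : w ^ 2 = v ^ 2 ↔ w = v ∨ w = -v := by
  refine ⟨fun hw => ?_, by rintro (rfl | rfl) <;> ring⟩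
  have hfactor : (w - v) * (w + v) = 0 := by linear_combination hw
  have hφw : φ w ^ 2 = φ v ^ 2 := by rw [← map_pow, hw, map_pow]
  have h2v : (2 : K) * φ v ≠ 0 := mul_ne_zero (NeZero.ne 2) hv
  rcases sq_eq_sq_iff_eq_or_eq_neg.1 hφw with h | h
  · have hunit : IsUnit (w + v) :=
      isUnit_of_ker_le_nilradical hφ (by rw [map_add, h]; rwa [← two_mul])
    exact .inl (sub_eq_zero.1 (hunit.mul_left_eq_zero.1 hfactor))
  · have hunit : IsUnit (w - v) :=
      isUnit_of_ker_le_nilradical hφ (by rw [map_sub, h]; contrapose! h2v; linear_combination -h2v)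
    exact .inr (eq_neg_of_add_eq_zero_left (hunit.mul_right_eq_zero.1 hfactor))

theorem ncard_setOf_sq_eq_of_ker_le_nilradical [NeZero (2 : K)] [IsAlgClosed K]
    (hφ : RingHom.ker φ ≤ nilradical A) {Δ : A} (hΔ : φ Δ ≠ 0) :
    {w : A | w ^ 2 = Δ}.ncard = 2 := by
  obtain ⟨d, hd⟩ := IsAlgClosed.exists_pow_nat_eq (φ Δ) two_pos
  have hd0 : d ≠ 0 := by rintro rfl; exact hΔ (by simpa using hd.symm)
  obtain ⟨v, rfl, rfl⟩ := exists_sq_eq_of_ker_le_nilradical hφ hd hd0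
  have hset : {w : A | w ^ 2 = v ^ 2} = {v, -v} := by
    ext w
    exact sq_eq_sq_iff_of_ker_le_nilradical hφ hd0
  rw [hset, Set.ncard_pair]
  intro hneg
  have hφneg := congrArg φ hneg
  rw [map_neg] at hφneg
  exact mul_ne_zero (NeZero.ne 2) hd0 (by linear_combination hφneg)

end NilKernel

theorem zeta_sq (n : ℕ) (i : Fin n) : zeta n i ^ 2 = 0 := by
  rw [zeta, ← map_pow, Ideal.Quotient.eq_zero_iff_mem]
  exact Ideal.subset_span ⟨i, rfl⟩

open MvPolynomial in
theorem ker_scalarPart_le_nilradical (n : ℕ) :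
    RingHom.ker (scalarPart n) ≤ nilradical (Zeon n) := by
  intro u hu
  obtain ⟨p, rfl⟩ := Ideal.Quotient.mk_surjective u
  have hp0 : constantCoeff p = 0 := by
    change aeval (fun _ => (0 : ℂ)) p = 0 at hu
    simpa using hu
  have hp : p ∈ Ideal.span (X '' Set.univ) := by
    refine mem_ideal_span_X_image.2 fun m hm => ?_
    obtain ⟨i, hi⟩ := Finsupp.ne_iff.1 (show m ≠ 0 by rintro rfl; exact mem_support_iff.1 hm hp0)
    exact ⟨i, trivial, hi⟩
  have hspan : (Ideal.span (X '' Set.univ)).map (Ideal.Quotient.mk (zeonIdeal n)) ≤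
      nilradical (Zeon n) := by
    rw [Ideal.map_span, Ideal.span_le]
    rintro _ ⟨_, ⟨i, -, rfl⟩, rfl⟩
    exact ⟨2, zeta_sq n i⟩
  exact hspan (Ideal.mem_map_of_mem _ hp)

/-- zeon quadratic formula. -/
theorem stmt15 (n : ℕ) (α β γ : Zeon n) (hα : scalarPart n α ≠ 0) :
    ({u : Zeon n | α * u ^ 2 + β * u + γ = 0} =
      {x : Zeon n | ∃ w : Zeon n, w ^ 2 = β ^ 2 - 4 * α * γ ∧
        x = ((2 : ℂ)⁻¹ • Ring.inverse α) * (w - β)}) ∧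
    (β ^ 2 - 4 * α * γ = 0 →
      {u : Zeon n | α * u ^ 2 + β * u + γ = 0} =
        {x : Zeon n | ∃ η : Zeon n, η ^ 2 = 0 ∧
          x = -((2 : ℂ)⁻¹ • (Ring.inverse α * β)) + η}) ∧
    (scalarPart n (β ^ 2 - 4 * α * γ) ≠ 0 →
      {u : Zeon n | α * u ^ 2 + β * u + γ = 0}.ncard = 2) := by
  have hφ := ker_scalarPart_le_nilradical n
  have ht : ((2 : ℂ)⁻¹ • Ring.inverse α) * (2 * α) = 1 := by
    rw [smul_mul_assoc, mul_left_comm,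
      Ring.inverse_mul_cancel _ (isUnit_of_ker_le_nilradical hφ hα), mul_one,
      ← map_ofNat (algebraMap ℂ (Zeon n)) 2, Algebra.algebraMap_eq_smul_one, smul_smul,
      inv_mul_cancel₀ two_ne_zero, one_smul]
  refine ⟨Set.ext fun _ => quadratic_eq_zero_iff_exists_sq_eq_discrim ht, fun hΔ => ?_,
    fun hΔ => ?_⟩
  · ext u
    rw [← smul_mul_assoc]
    exact quadratic_eq_zero_iff_exists_sq_eq_zero ht hΔ
  · rw [ncard_setOf_quadratic_eq_zero ht]
    exact ncard_setOf_sq_eq_of_ker_le_nilradical hφ hΔ
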